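/- arXiv:math/0211377 — 2 statements merged into one kernel-verified Lean document; each statement's English description precedes it below -/
import Mathlib

section
/- Let W_{l-1}, W_l, W_{l+1} be complex polynomials arising as consecutive Wronskians of a nested family of polynomial subspaces V(l-1) ⊂ V(l) ⊂ V(l+1). Suppose t ∈ ℂ satisfies W_l(t) = 0 and W_{l±1}(t) ≠ 0. Then t is a simple root of W_l (i.e. W_l'(t) ≠ 0) and W_l''(t)/W_l'(t) − W_{l+1}'(t)/W_{l+1}(t) − W_{l-1}'(t)/W_{l-1}(t) = 0. -/
open Polynomial

/-- The Wronskian determinant of the first `i` polynomials of a family. -/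
noncomputable def wronskianFin (i : ℕ) (f : Fin i → Polynomial ℂ) : Polynomial ℂ :=
  Matrix.det (Matrix.of fun a b : Fin i => (⇑Polynomial.derivative)^[(a : ℕ)] (f b))

section Aux

lemma det_updateRow_single' {R : Type*} [CommRing R] {n : ℕ}
    (A : Matrix (Fin (n+1)) (Fin (n+1)) R) (i j : Fin (n+1)) :
    (A.updateRow i (Pi.single j (1:R))).det
      = (-1)^((i:ℕ)+(j:ℕ)) * (A.submatrix i.succAbove j.succAbove).det := by
  rw [Matrix.det_succ_row _ i]
  rw [Fintype.sum_eq_single j]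
  · have hsub : (A.updateRow i (Pi.single j (1:R))).submatrix i.succAbove j.succAbove
        = A.submatrix i.succAbove j.succAbove := by
      ext a b
      simp [Matrix.updateRow_apply, Fin.succAbove_ne i a]
    rw [hsub, Matrix.updateRow_self]
    simp
  · intro x hx
    simp [Matrix.updateRow_self, Pi.single_apply, hx]

lemma derivative_finset_prod {ι : Type*} [DecidableEq ι] (s : Finset ι) (f : ι → ℂ[X]) :
    derivative (∏ i ∈ s, f i) = ∑ i ∈ s, (∏ j ∈ s.erase i, f j) * derivative (f i) := by
  classical
  induction s using Finset.induction_on with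
  | empty => simp
  | insert a s ha ih =>
    rw [Finset.prod_insert ha, derivative_mul, ih, Finset.mul_sum, Finset.sum_insert ha]
    congr 1
    · rw [Finset.erase_insert ha, mul_comm]
    · refine Finset.sum_congr rfl fun i hi => ?_
      rw [Finset.erase_insert_of_ne (by rintro rfl; exact ha hi),
        Finset.prod_insert (fun h => ha (Finset.mem_of_mem_erase h)), mul_assoc]

lemma det_updateColumn_eq {R : Type*} [CommRing R] {ι : Type*} [Fintype ι] [DecidableEq ι]
    (M : Matrix ι ι R) (j : ι) (g : ι → R) :
    (M.updateCol j g).det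
      = ∑ σ : Equiv.Perm ι, Equiv.Perm.sign σ •
          (g (σ j) * ∏ i ∈ Finset.univ.erase j, M (σ i) i) := by
  rw [Matrix.det_apply]
  refine Finset.sum_congr rfl fun σ _ => ?_
  congr 1
  rw [← Finset.mul_prod_erase Finset.univ _ (Finset.mem_univ j)]
  congr 1
  · simp [Matrix.updateCol_apply]
  · exact Finset.prod_congr rfl fun i hi => by
      simp [Matrix.updateCol_apply, (Finset.mem_erase.mp hi).1]

lemma derivative_det_col {ι : Type*} [Fintype ι] [DecidableEq ι] (M : Matrix ι ι ℂ[X]) :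
    derivative M.det = ∑ j, (M.updateCol j fun r => derivative (M r j)).det := by
  rw [Matrix.det_apply, map_sum]
  have key : ∀ σ : Equiv.Perm ι, derivative (Equiv.Perm.sign σ • ∏ i, M (σ i) i)
      = ∑ j, Equiv.Perm.sign σ •
          ((∏ i ∈ Finset.univ.erase j, M (σ i) i) * derivative (M (σ j) j)) := by
    intro σ
    rw [Units.smul_def, map_zsmul, derivative_finset_prod, Finset.smul_sum]
    simp [Units.smul_def]
  rw [Finset.sum_congr rfl fun σ _ => key σ, Finset.sum_comm]
  refine Finset.sum_congr rfl fun j _ => ?_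
  rw [det_updateColumn_eq]
  refine Finset.sum_congr rfl fun σ _ => ?_
  rw [mul_comm]

lemma derivative_det_row {ι : Type*} [Fintype ι] [DecidableEq ι] (M : Matrix ι ι ℂ[X]) :
    derivative M.det = ∑ i, (M.updateRow i fun c => derivative (M i c)).det := by
  conv_lhs => rw [← Matrix.det_transpose M]
  rw [derivative_det_col]
  refine Finset.sum_congr rfl fun i _ => ?_
  rw [Matrix.updateCol_transpose, Matrix.det_transpose]
  rfl

lemma derivative_wronskianFin {n : ℕ} (f : Fin (n+1) → Polynomial ℂ) :
    derivative (wronskianFin (n+1) f)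
      = ((Matrix.of fun a b : Fin (n+1) => (⇑derivative)^[(a:ℕ)] (f b)).updateRow (Fin.last n)
          fun b => (⇑derivative)^[n+1] (f b)).det := by
  rw [wronskianFin, derivative_det_row, Fintype.sum_eq_single (Fin.last n)]
  · congr 1
    funext b
    simp [Function.iterate_succ_apply']
  · intro i hi
    have hvi : (i : ℕ) < n := by
      have h1 : (i : ℕ) < n + 1 := i.isLt
      have h2 : (i : ℕ) ≠ n := fun h => hi (Fin.ext (by simp [h]))
      omega
    have hne : i ≠ (⟨(i : ℕ) + 1, by omega⟩ : Fin (n+1)) := by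
      intro h
      have := congrArg Fin.val h
      simp at this
    apply Matrix.det_zero_of_row_eq hne
    rw [Matrix.updateRow_self, Matrix.updateRow_ne hne.symm]
    funext c
    simp [Function.iterate_succ_apply']

lemma jacobi_two {R : Type*} [CommRing R] [IsDomain R] {m : ℕ}
    (M : Matrix (Fin m ⊕ Fin 2) (Fin m ⊕ Fin 2) R) (hM : M.det ≠ 0) :
    (M.updateRow (.inr 0) (Pi.single (.inr 0) 1)).det *
        (M.updateRow (.inr 1) (Pi.single (.inr 1) 1)).det -
      (M.updateRow (.inr 1) (Pi.single (.inr 0) 1)).det *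
        (M.updateRow (.inr 0) (Pi.single (.inr 1) 1)).det
      = M.toBlocks₁₁.det * M.det := by
  classical
  set N : Matrix (Fin m ⊕ Fin 2) (Fin m ⊕ Fin 2) R :=
    Matrix.fromBlocks 1 0 (Matrix.of fun b a => M.adjugate (.inr b) (.inl a))
      (Matrix.of fun b b' => M.adjugate (.inr b) (.inr b')) with hN
  have hrow : ∀ (b : Fin 2) (k), N (.inr b) k = M.adjugate (.inr b) k := by
    intro b k; cases k <;> simp [hN, Matrix.fromBlocks]
  have h1 : ∀ (a : Fin m) (j), (N * M) (.inl a) j = M (.inl a) j := by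
    intro a j
    rw [Matrix.mul_apply, Fintype.sum_sum_type]
    simp [hN, Matrix.one_apply, Finset.sum_ite_eq, Matrix.fromBlocks]
  have h2 : ∀ (b : Fin 2) (j), (N * M) (.inr b) j
      = (M.det • (1 : Matrix (Fin m ⊕ Fin 2) (Fin m ⊕ Fin 2) R)) (.inr b) j := by
    intro b j
    rw [Matrix.mul_apply]
    calc ∑ k, N (.inr b) k * M k j = ∑ k, M.adjugate (.inr b) k * M k j := by
          refine Finset.sum_congr rfl fun k _ => ?_; rw [hrow]
      _ = (M.adjugate * M) (.inr b) j := (Matrix.mul_apply).symm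
      _ = _ := by rw [Matrix.adjugate_mul]
  have hNM : N * M = Matrix.fromBlocks M.toBlocks₁₁ M.toBlocks₁₂ 0 (M.det • 1) := by
    ext i j
    cases i with
    | inl a =>
      rw [h1]
      cases j <;> simp [Matrix.toBlocks₁₁, Matrix.toBlocks₁₂]
    | inr b =>
      rw [h2]
      cases j <;> simp [Matrix.one_apply, Matrix.smul_apply]
  have hdetN : N.det = M.adjugate (.inr 0) (.inr 0) * M.adjugate (.inr 1) (.inr 1)
      - M.adjugate (.inr 0) (.inr 1) * M.adjugate (.inr 1) (.inr 0) := by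
    rw [hN, Matrix.det_fromBlocks_zero₁₂, Matrix.det_one, one_mul, Matrix.det_fin_two]
    simp
  have hdetNM : N.det * M.det = M.toBlocks₁₁.det * (M.det * M.det) := by
    rw [← Matrix.det_mul, hNM, Matrix.det_fromBlocks_zero₂₁, Matrix.det_smul, Matrix.det_one]
    rw [Fintype.card_fin]
    ring
  have hfinal : N.det = M.toBlocks₁₁.det * M.det := by
    apply mul_right_cancel₀ hM
    rw [hdetNM]; ring
  rw [← hfinal, hdetN]
  simp only [Matrix.adjugate_apply]

end Aux

/-- If `t` is a root of the Wronskian `W_l` of a nested family of polynomial spaces but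
not of `W_{l-1}` and `W_{l+1}`, then `t` is a simple root of `W_l` and
`W_l''(t)/W_l'(t) − W_{l+1}'(t)/W_{l+1}(t) − W_{l-1}'(t)/W_{l-1}(t) = 0`. -/
theorem stmt7 (l : ℕ) (hl : 1 ≤ l) (P : ℕ → Polynomial ℂ)
    (hP : LinearIndependent ℂ (fun j : Fin (l + 1) => P (j : ℕ)))
    (Wr : ℕ → Polynomial ℂ)
    (hWr : ∀ i, Wr i = wronskianFin i (fun j => P (j : ℕ)))
    (t : ℂ)
    (h0 : (Wr l).eval t = 0)
    (hm : (Wr (l - 1)).eval t ≠ 0)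
    (hp : (Wr (l + 1)).eval t ≠ 0) :
    (Polynomial.derivative (Wr l)).eval t ≠ 0 ∧
    (Polynomial.derivative (Polynomial.derivative (Wr l))).eval t /
        (Polynomial.derivative (Wr l)).eval t -
      (Polynomial.derivative (Wr (l + 1))).eval t / (Wr (l + 1)).eval t -
      (Polynomial.derivative (Wr (l - 1))).eval t / (Wr (l - 1)).eval t = 0 := by
  obtain ⟨m, rfl⟩ : ∃ m, l = m + 1 := ⟨l - 1, by omega⟩
  simp only [Nat.add_sub_cancel] at hm ⊢
  clear hP hl
  have hm2 : m < m + 2 := by omega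
  set mid : Fin (m+2) := ⟨m, hm2⟩ with hmiddef
  set Q : ℕ → Polynomial ℂ := fun j => if j = m then P (m+1) else P j with hQdef
  set G : Polynomial ℂ := wronskianFin (m+1) (fun j => Q (j : ℕ)) with hGdef
  set bigM : Matrix (Fin (m+2)) (Fin (m+2)) (Polynomial ℂ) :=
    Matrix.of (fun a b : Fin (m+2) => (⇑derivative)^[(a:ℕ)] (P (b:ℕ))) with hbigM
  set M : Matrix (Fin m ⊕ Fin 2) (Fin m ⊕ Fin 2) (Polynomial ℂ) :=
    bigM.submatrix finSumFinEquiv finSumFinEquiv with hMdef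
  have hdetM : M.det = Wr (m+1+1) := by
    rw [hMdef, Matrix.det_submatrix_equiv_self, hWr]
    rfl
  have hMne : M.det ≠ 0 := by
    rw [hdetM]
    intro h
    rw [h] at hp; simp at hp
  have hblk : M.toBlocks₁₁.det = Wr m := by
    rw [hWr m, wronskianFin]
    congr 1
  have hr0 : finSumFinEquiv (Sum.inr (0 : Fin 2)) = mid := by
    apply Fin.ext
    simp [hmiddef]
  have hr1 : finSumFinEquiv (Sum.inr (1 : Fin 2)) = Fin.last (m+1) := by
    apply Fin.ext
    simp [Fin.val_last]
  have hA : ∀ a b : Fin 2, (M.updateRow (.inr b) (Pi.single (.inr a) 1)).det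
      = (-1 : ℂ[X])^((((finSumFinEquiv (Sum.inr b) : Fin (m+2))) : ℕ)
          + (((finSumFinEquiv (Sum.inr a) : Fin (m+2))) : ℕ))
        * (bigM.submatrix (finSumFinEquiv (Sum.inr b) : Fin (m+2)).succAbove
            (finSumFinEquiv (Sum.inr a) : Fin (m+2)).succAbove).det := by
    intro a b
    rw [hMdef, Matrix.updateRow_submatrix_equiv, Matrix.det_submatrix_equiv_self]
    have hsingle : (fun j : Fin (m+2) =>
          (Pi.single (Sum.inr a : Fin m ⊕ Fin 2) (1:ℂ[X]) : Fin m ⊕ Fin 2 → ℂ[X])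
            (finSumFinEquiv.symm j))
        = (Pi.single (finSumFinEquiv (Sum.inr a)) (1:ℂ[X]) : Fin (m+2) → ℂ[X]) := by
      funext j
      simp [Pi.single_apply, Equiv.symm_apply_eq]
    rw [hsingle, det_updateRow_single']
  have hsuccMid : ∀ x : Fin (m+1),
      ((mid.succAbove x : Fin (m+2)) : ℕ) = if (x:ℕ) < m then (x:ℕ) else (x:ℕ)+1 := by
    intro x
    simp only [Fin.succAbove, Fin.lt_def, Fin.coe_castSucc, hmiddef]
    split_ifs with h <;> simp
  have hcol : ∀ b : Fin (m+1), P ((mid.succAbove b : Fin (m+2)) : ℕ) = Q (b : ℕ) := by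
    intro b
    rw [hsuccMid b, hQdef]
    by_cases h : (b:ℕ) < m
    · simp [h, Nat.ne_of_lt h]
    · have hb : (b:ℕ) = m := by have := b.isLt; omega
      simp [h, hb]
  have hS11 : (bigM.submatrix (Fin.last (m+1)).succAbove (Fin.last (m+1)).succAbove).det
      = Wr (m+1) := by
    rw [hWr, wronskianFin]
    congr 1
    ext a b
    simp [hbigM, Fin.succAbove_last]
  have hS10 : (bigM.submatrix (Fin.last (m+1)).succAbove mid.succAbove).det = G := by
    rw [hGdef, wronskianFin]
    congr 1
    ext a b
    simp only [hbigM, Matrix.submatrix_apply, Matrix.of_apply, Fin.succAbove_last,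
      Fin.coe_castSucc]
    rw [hcol b]
  have hS01 : (bigM.submatrix mid.succAbove (Fin.last (m+1)).succAbove).det
      = derivative (Wr (m+1)) := by
    rw [hWr, derivative_wronskianFin]
    congr 1
    ext a b
    rw [Matrix.updateRow_apply]
    by_cases h : a = Fin.last m
    · subst h
      have hval : ((mid.succAbove (Fin.last m) : Fin (m+2)) : ℕ) = m + 1 := by
        rw [hsuccMid]; simp
      rw [if_pos rfl]
      simp only [Matrix.submatrix_apply, Matrix.of_apply, Fin.succAbove_last,
        Fin.coe_castSucc, hval, hbigM]
    · have hlt : (a:ℕ) < m := by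
        have h1 := a.isLt
        have h2 : (a:ℕ) ≠ m := fun hh => h (Fin.ext (by simp [hh]))
        omega
      have hval : ((mid.succAbove a : Fin (m+2)) : ℕ) = (a : ℕ) := by
        rw [hsuccMid a]; simp [hlt]
      rw [if_neg h]
      simp only [Matrix.submatrix_apply, Matrix.of_apply, Fin.succAbove_last,
        Fin.coe_castSucc, hval, hbigM]
  have hS00 : (bigM.submatrix mid.succAbove mid.succAbove).det = derivative G := by
    rw [hGdef, derivative_wronskianFin]
    congr 1
    ext a b
    rw [Matrix.updateRow_apply]
    by_cases h : a = Fin.last m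
    · subst h
      have hval : ((mid.succAbove (Fin.last m) : Fin (m+2)) : ℕ) = m + 1 := by
        rw [hsuccMid]; simp
      rw [if_pos rfl]
      simp only [Matrix.submatrix_apply, Matrix.of_apply, hval, hbigM]
      rw [hcol b]
    · have hlt : (a:ℕ) < m := by
        have h1 := a.isLt
        have h2 : (a:ℕ) ≠ m := fun hh => h (Fin.ext (by simp [hh]))
        omega
      have hval : ((mid.succAbove a : Fin (m+2)) : ℕ) = (a : ℕ) := by
        rw [hsuccMid a]; simp [hlt]
      rw [if_neg h]
      simp only [Matrix.submatrix_apply, Matrix.of_apply, hval, hbigM]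
      rw [hcol b]
  have hpow_even : ∀ k : ℕ, ((-1 : ℂ[X]))^(2*k) = 1 := by
    intro k; rw [pow_mul]; simp
  have hvmid : ((mid : Fin (m+2)) : ℕ) = m := rfl
  have hvlast : ((Fin.last (m+1) : Fin (m+2)) : ℕ) = m + 1 := rfl
  have hA00 : (M.updateRow (.inr 0) (Pi.single (.inr 0) 1)).det = derivative G := by
    rw [hA 0 0, hr0, hS00, hvmid, ← two_mul, hpow_even, one_mul]
  have hA11 : (M.updateRow (.inr 1) (Pi.single (.inr 1) 1)).det = Wr (m+1) := by
    rw [hA 1 1, hr1, hS11, hvlast, ← two_mul, hpow_even, one_mul]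
  have hA01 : (M.updateRow (.inr 1) (Pi.single (.inr 0) 1)).det = -G := by
    rw [hA 0 1, hr0, hr1, hS10, hvmid, hvlast,
      show (m+1) + m = 2*m+1 from by ring, pow_succ, hpow_even, one_mul]
    ring
  have hA10 : (M.updateRow (.inr 0) (Pi.single (.inr 1) 1)).det
      = -(derivative (Wr (m+1))) := by
    rw [hA 1 0, hr0, hr1, hS01, hvmid, hvlast,
      show m + (m+1) = 2*m+1 from by ring, pow_succ, hpow_even, one_mul]
    ring
  have key : derivative G * Wr (m+1) - G * derivative (Wr (m+1)) = Wr m * Wr (m+1+1) := by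
    have h := jacobi_two M hMne
    rw [hA00, hA11, hA01, hA10, hblk, hdetM] at h
    linear_combination h
  have e1 : (Wr m).eval t * (Wr (m+1+1)).eval t
      = -(G.eval t * (derivative (Wr (m+1))).eval t) := by
    have h := congrArg (eval t) key
    simp only [eval_mul, eval_sub, h0, mul_zero, zero_sub] at h
    linear_combination -h
  have hw' : (derivative (Wr (m+1))).eval t ≠ 0 := by
    intro h
    rw [h, mul_zero, neg_zero] at e1
    rcases mul_eq_zero.mp e1 with h' | h'
    · exact hm h'
    · exact hp h'
  have hGt : G.eval t ≠ 0 := by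
    intro h
    rw [h, zero_mul, neg_zero] at e1
    rcases mul_eq_zero.mp e1 with h' | h'
    · exact hm h'
    · exact hp h'
  have e2 : (derivative (Wr m)).eval t * (Wr (m+1+1)).eval t
        + (Wr m).eval t * (derivative (Wr (m+1+1))).eval t
      = -(G.eval t * (derivative (derivative (Wr (m+1)))).eval t) := by
    have h := congrArg (⇑derivative) key
    simp only [derivative_mul, derivative_sub] at h
    have h2 := congrArg (eval t) h
    simp only [eval_mul, eval_sub, eval_add, h0, mul_zero, add_zero, zero_add] at h2
    linear_combination -h2
  constructor
  · exact hw'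
  · field_simp
    linear_combination ((derivative (derivative (Wr (m+1)))).eval t) * e1
      - ((derivative (Wr (m+1))).eval t) * e2
end

section
/- Suppose a linear differential equation x^k F_0(x)u^{(p)} + x^{k−1}F_1(x)u^{(p−1)} + F_2(x)u^{(p−2)} + ... + F_p(x)u = 0 with polynomial coefficients, F_0(0) ≠ 0, F_1(0) ≠ 0, k ≥ 2, has solutions of the form x^i f_i(x) with f_i(0) ≠ 0 for each i = 0, 1, ..., p−2. Then F_2(0) = F_3(0) = ... = F_p(0) = 0. -/
/-!
Evaluating the equation at `0` kills the two leading terms (as `k ≥ 2`), and the value of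
`u^{(m)}` at `0` is `m! · [x^m] u`, so every solution gives the linear relation
`∑_{j=2}^p F_j(0) (p-j)! [x^{p-j}] u = 0`. For `u = x^i f_i` the coefficients below `x^i` vanish
and the one at `x^i` is `f_i(0) ≠ 0`, so the relations are triangular: taking `i = p - j` for
`j = 2, 3, …, p` in turn yields `F_j(0) = 0` once the earlier `F_b(0)` are known to vanish.
-/

open Polynomial Finset Nat

variable {R : Type*}

theorem Polynomial.eval_zero_iterate_derivative [Semiring R] (q : R[X]) (m : ℕ) :
    (derivative^[m] q).eval 0 = m ! * q.coeff m := by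
  rw [← coeff_zero_eq_eval_zero, coeff_iterate_derivative, zero_add, descFactorial_self,
    nsmul_eq_mul]

theorem sum_eval_zero_mul_factorial_coeff_eq_zero [CommSemiring R] {p k : ℕ} (hk : 2 ≤ k)
    {F : ℕ → R[X]} {u : R[X]}
    (hu : X ^ k * F 0 * derivative^[p] u + X ^ (k - 1) * F 1 * derivative^[p - 1] u +
      ∑ j ∈ Icc 2 p, F j * derivative^[p - j] u = 0) :
    ∑ j ∈ Icc 2 p, (F j).eval 0 * ((p - j)! * u.coeff (p - j)) = 0 := by
  have h := congrArg (eval 0) hu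
  simpa only [eval_add, eval_mul, eval_pow, eval_X, eval_finsetSum, eval_zero,
    zero_pow (show k ≠ 0 by omega), zero_pow (show k - 1 ≠ 0 by omega), zero_mul, zero_add,
    eval_zero_iterate_derivative] using h

theorem eq_zero_of_sum_mul_triangular_eq_zero [Semiring R] [NoZeroDivisors R] (p : ℕ)
    {a : ℕ → R} {c : ℕ → ℕ → R} (hdiag : ∀ i ≤ p - 2, c i i ≠ 0)
    (hbelow : ∀ i ≤ p - 2, ∀ n < i, c i n = 0)
    (hsum : ∀ i ≤ p - 2, ∑ j ∈ Icc 2 p, a j * c i (p - j) = 0) :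
    ∀ j, 2 ≤ j → j ≤ p → a j = 0 := by
  intro j
  induction j using Nat.strong_induction_on with
  | _ j ih =>
    intro h2j hjp
    have hi : p - j ≤ p - 2 := by omega
    have hsingle : ∑ b ∈ Icc 2 p, a b * c (p - j) (p - b) = a j * c (p - j) (p - j) := by
      refine sum_eq_single_of_mem j (mem_Icc.mpr ⟨h2j, hjp⟩) fun b hb hbj => ?_
      obtain ⟨h2b, hbp⟩ := mem_Icc.mp hb
      rcases lt_or_gt_of_ne hbj with hlt | hgt
      · rw [ih b hlt h2b hbp, zero_mul]
      · rw [hbelow _ hi _ (by omega), mul_zero]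
    have hprod := hsum (p - j) hi
    rw [hsingle] at hprod
    exact (mul_eq_zero.mp hprod).resolve_right (hdiag _ hi)

theorem stmt15_general (p k : ℕ) (hk : 2 ≤ k)
    (F : ℕ → Polynomial ℂ)
    (f : ℕ → Polynomial ℂ)
    (hf : ∀ i, i ≤ p - 2 → (f i).eval 0 ≠ 0)
    (hsol : ∀ i, i ≤ p - 2 →
      X ^ k * F 0 * (⇑Polynomial.derivative)^[p] (X ^ i * f i) +
        X ^ (k - 1) * F 1 * (⇑Polynomial.derivative)^[p - 1] (X ^ i * f i) +
        ∑ j ∈ Finset.Icc 2 p, F j * (⇑Polynomial.derivative)^[p - j] (X ^ i * f i) = 0) :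
    ∀ j, 2 ≤ j → j ≤ p → (F j).eval 0 = 0 := by
  set c : ℕ → ℕ → ℂ := fun i n => (n ! : ℂ) * (X ^ i * f i).coeff n
  have hdiag : ∀ i ≤ p - 2, c i i ≠ 0 := fun i hi => by
    simpa [c, coeff_X_pow_mul', coeff_zero_eq_eval_zero, factorial_ne_zero] using hf i hi
  have hbelow : ∀ i ≤ p - 2, ∀ n < i, c i n = 0 := fun i _ n hn => by
    simp [c, coeff_X_pow_mul', not_le.mpr hn]
  exact eq_zero_of_sum_mul_triangular_eq_zero p hdiag hbelow
    fun i hi => sum_eval_zero_mul_factorial_coeff_eq_zero hk (hsol i hi)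

/-- If the equation `x^k F₀u^{(p)} + x^{k−1}F₁u^{(p−1)} + F₂u^{(p−2)} + … + F_pu = 0` with
`F₀(0) ≠ 0`, `F₁(0) ≠ 0`, `k ≥ 2`, has solutions `x^i·fᵢ(x)` with `fᵢ(0) ≠ 0` for each
`i = 0,…,p−2`, then `F₂(0) = … = F_p(0) = 0`. -/
theorem stmt15 (p k : ℕ) (hp : 2 ≤ p) (hk : 2 ≤ k)
    (F : ℕ → Polynomial ℂ)
    (hF0 : (F 0).eval 0 ≠ 0) (hF1 : (F 1).eval 0 ≠ 0)
    (f : ℕ → Polynomial ℂ)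
    (hf : ∀ i, i ≤ p - 2 → (f i).eval 0 ≠ 0)
    (hsol : ∀ i, i ≤ p - 2 →
      X ^ k * F 0 * (⇑Polynomial.derivative)^[p] (X ^ i * f i) +
        X ^ (k - 1) * F 1 * (⇑Polynomial.derivative)^[p - 1] (X ^ i * f i) +
        ∑ j ∈ Finset.Icc 2 p, F j * (⇑Polynomial.derivative)^[p - j] (X ^ i * f i) = 0) :
    ∀ j, 2 ≤ j → j ≤ p → (F j).eval 0 = 0 :=
  stmt15_general p k hk F f hf hsol
end
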